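/- arXiv:2111.11735 — 3 statements merged into one kernel-verified Lean document; each statement's English description precedes it below -/
import Mathlib

section
/- Let H be a real Hilbert space, k ≥ 2, and let M be an m-dimensional C^k-submanifold of H. Let φ₁ : V₁ → U₁ ∩ M and φ₂ : V₂ → U₂ ∩ M be two local parametrizations of M with U ∩ M ≠ ∅, where U := U₁ ∩ U₂. Then for all y ∈ U ∩ M and all w₁, w₂ ∈ T_y M one has D²φ₁(x₁)(v₁, v₂) − D²φ₂(x₂)(u₁, u₂) ∈ T_y M, where x_i := φ_i⁻¹(y) and v_i := Dφ₁(x₁)⁻¹ w_i, u_i := Dφ₂(x₂)⁻¹ w_i ∈ ℝ^m for i = 1, 2 (the inverses of Dφ₁(x₁), Dφ₂(x₂) being taken as linear isomorphisms ℝ^m → T_y M). -/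
open Set Function

noncomputable section

/-- `φ : V → U ∩ M` is a `C^k` local parametrization of the subset `M ⊆ H`. -/
structure IsLocalParam {H : Type*} [NormedAddCommGroup H] [NormedSpace ℝ H] {m : ℕ}
    (k : ℕ∞) (M : Set H) (V : Set (EuclideanSpace ℝ (Fin m))) (U : Set H)
    (φ : EuclideanSpace ℝ (Fin m) → H) : Prop where
  isOpen_source : IsOpen V
  isOpen_target : IsOpen U
  contDiffOn : ContDiffOn ℝ k φ V
  injOn : Set.InjOn φ V
  image_eq : φ '' V = U ∩ M
  continuousOn_inv : ContinuousOn (Function.invFunOn φ V) (U ∩ M)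
  immersion : ∀ x ∈ V, Function.Injective (fderivWithin ℝ φ V x)

/-- `M` is an `m`-dimensional `C^k`-submanifold of `H`. -/
def IsSubmanifold {H : Type*} [NormedAddCommGroup H] [NormedSpace ℝ H]
    (k : ℕ∞) (m : ℕ) (M : Set H) : Prop :=
  ∀ y ∈ M, ∃ (V : Set (EuclideanSpace ℝ (Fin m))) (U : Set H)
    (φ : EuclideanSpace ℝ (Fin m) → H), IsLocalParam k M V U φ ∧ y ∈ U

/-- The tangent space `T_y M` of the submanifold `M` at `y`. -/
def TangentAt {H : Type*} [NormedAddCommGroup H] [NormedSpace ℝ H]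
    (k : ℕ∞) (m : ℕ) (M : Set H) (y : H) : Set H :=
  {w | ∃ (V : Set (EuclideanSpace ℝ (Fin m))) (U : Set H)
    (φ : EuclideanSpace ℝ (Fin m) → H) (x : EuclideanSpace ℝ (Fin m)),
    IsLocalParam k M V U φ ∧ x ∈ V ∧ φ x = y ∧ w ∈ Set.range (fderivWithin ℝ φ V x)}

/-- `M` has one chart: a single local parametrization covers all of `M`. -/
def HasOneChart {H : Type*} [NormedAddCommGroup H] [NormedSpace ℝ H]
    (k : ℕ∞) (m : ℕ) (M : Set H) : Prop :=
  ∃ (V : Set (EuclideanSpace ℝ (Fin m))) (U : Set H)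
    (φ : EuclideanSpace ℝ (Fin m) → H), IsLocalParam k M V U φ ∧ M ⊆ U

/-!
Near `x₂` the parametrization `φ₂` factors as `φ₁ ∘ τ` with `τ` of class `C^k` and `τ x₂ = x₁`.
The set-theoretic transition map `φ₁⁻¹ ∘ φ₂` is continuous, and near `x₂` it agrees with `g ∘ φ₂`,
where `g` is a `C^k` local left inverse of `φ₁`: the local inverse of `L ∘ φ₁` composed with `L`,
for `L` a continuous linear left inverse of `Dφ₁(x₁)`. The chain rule gives `Dτ(x₂) uᵢ = vᵢ` and
`D²φ₂(x₂)(u₁, u₂) = D²φ₁(x₁)(v₁, v₂) + Dφ₁(x₁)(D²τ(x₂)(u₁, u₂))`,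
so the difference is `-Dφ₁(x₁)(D²τ(x₂)(u₁, u₂)) ∈ T_y M`.
-/

open Topology Filter

theorem ContinuousLinearMap.HasLeftInverse.of_injective_of_finiteDimensional_domain
    {𝕜 E F : Type*} [RCLike 𝕜] [NormedAddCommGroup E] [NormedSpace 𝕜 E]
    [FiniteDimensional 𝕜 E]
    [NormedAddCommGroup F] [NormedSpace 𝕜 F] {f : E →L[𝕜] F} (hf : Injective f) :
    f.HasLeftInverse := by
  obtain ⟨p, hp⟩ :=
    Submodule.ClosedComplemented.of_finiteDimensional (LinearMap.range f.toLinearMap)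
  let e := (LinearEquiv.ofInjective f.toLinearMap hf).toContinuousLinearEquiv
  refine ⟨(e.symm : LinearMap.range f.toLinearMap →L[𝕜] E).comp p, fun x ↦ ?_⟩
  have : p (f x) = e x := hp (e x)
  simp [this]

theorem ContDiffAt.exists_leftInverse_of_injective_fderiv
    {𝕜 E F : Type*} [RCLike 𝕜] [NormedAddCommGroup E] [NormedSpace 𝕜 E]
    [FiniteDimensional 𝕜 E]
    [NormedAddCommGroup F] [NormedSpace 𝕜 F] {n : WithTop ℕ∞} {f : E → F} {a : E}
    (hf : ContDiffAt 𝕜 n f a) (hn : n ≠ 0) (hinj : Injective (fderiv 𝕜 f a)) :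
    ∃ g : F → E, ContDiffAt 𝕜 n g (f a) ∧ ∀ᶠ z in 𝓝 a, g (f z) = z := by
  have : CompleteSpace E := FiniteDimensional.complete 𝕜 E
  obtain ⟨L, hL⟩ :=
    ContinuousLinearMap.HasLeftInverse.of_injective_of_finiteDimensional_domain hinj
  have hLf : ContDiffAt 𝕜 n (L ∘ f) a := L.contDiff.contDiffAt.comp a hf
  have hLf' : HasFDerivAt (L ∘ f)
      ((ContinuousLinearEquiv.refl 𝕜 E : E ≃L[𝕜] E) : E →L[𝕜] E) a := by
    convert L.hasFDerivAt.comp a (hf.differentiableAt hn).hasFDerivAt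
    ext v
    exact (hL _).symm
  exact ⟨hLf.localInverse hLf' hn ∘ L,
    (hLf.to_localInverse hLf' hn).comp (f a) L.contDiff.contDiffAt,
    (hLf.hasStrictFDerivAt' hLf' hn).eventually_left_inverse⟩

theorem fderiv_fderiv_comp_apply {𝕜 E F G : Type*} [NontriviallyNormedField 𝕜]
    [NormedAddCommGroup E] [NormedSpace 𝕜 E] [NormedAddCommGroup F] [NormedSpace 𝕜 F]
    [NormedAddCommGroup G] [NormedSpace 𝕜 G] {f : F → G} {τ : E → F} {x : E}
    (hf : ContDiffAt 𝕜 2 f (τ x)) (hτ : ContDiffAt 𝕜 2 τ x) (u₁ u₂ : E) :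
    fderiv 𝕜 (fderiv 𝕜 (f ∘ τ)) x u₁ u₂
      = fderiv 𝕜 (fderiv 𝕜 f) (τ x) (fderiv 𝕜 τ x u₁) (fderiv 𝕜 τ x u₂)
        + fderiv 𝕜 f (τ x) (fderiv 𝕜 (fderiv 𝕜 τ) x u₁ u₂) := by
  have hfτ : ∀ᶠ z in 𝓝 x, ContDiffAt 𝕜 2 f (τ z) :=
    hτ.continuousAt.eventually (hf.eventually (by simp))
  have hchain : fderiv 𝕜 (f ∘ τ) =ᶠ[𝓝 x] fun z ↦ (fderiv 𝕜 f (τ z)).comp (fderiv 𝕜 τ z) := by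
    filter_upwards [hfτ, hτ.eventually (by simp)] with z hfz hτz
    exact fderiv_comp z (hfz.differentiableAt two_ne_zero) (hτz.differentiableAt two_ne_zero)
  have hDf : DifferentiableAt 𝕜 (fderiv 𝕜 f) (τ x) :=
    (hf.fderiv_right (m := 1) (by norm_num)).differentiableAt one_ne_zero
  have hDτ : DifferentiableAt 𝕜 (fderiv 𝕜 τ) x :=
    (hτ.fderiv_right (m := 1) (by norm_num)).differentiableAt one_ne_zero
  have hcomp : HasFDerivAt (fun z ↦ (fderiv 𝕜 f (τ z)).comp (fderiv 𝕜 τ z)) _ x :=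
    (hDf.hasFDerivAt.comp x (hτ.differentiableAt two_ne_zero).hasFDerivAt).clm_comp
      hDτ.hasFDerivAt
  rw [hchain.fderiv_eq, hcomp.fderiv]
  simp [add_comm]

theorem fderivWithin_fderivWithin_of_isOpen {𝕜 E F : Type*} [NontriviallyNormedField 𝕜]
    [NormedAddCommGroup E] [NormedSpace 𝕜 E] [NormedAddCommGroup F] [NormedSpace 𝕜 F]
    {f : E → F} {s : Set E} {x : E} (hs : IsOpen s) (hx : x ∈ s) :
    fderivWithin 𝕜 (fderivWithin 𝕜 f s) s x = fderiv 𝕜 (fderiv 𝕜 f) x := by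
  rw [fderivWithin_of_isOpen hs hx]
  have : fderivWithin 𝕜 f s =ᶠ[𝓝 x] fderiv 𝕜 f :=
    eventually_of_mem (hs.mem_nhds hx) fun y hy ↦ fderivWithin_of_isOpen hs hy
  exact this.fderiv_eq

namespace IsLocalParam

variable {H : Type*} [NormedAddCommGroup H] [NormedSpace ℝ H] {m : ℕ} {k : ℕ∞} {M : Set H}
  {V : Set (EuclideanSpace ℝ (Fin m))} {U : Set H} {φ : EuclideanSpace ℝ (Fin m) → H}
  {a : EuclideanSpace ℝ (Fin m)}

theorem contDiffAt (h : IsLocalParam k M V U φ) (ha : a ∈ V) : ContDiffAt ℝ k φ a :=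
  h.contDiffOn.contDiffAt (h.isOpen_source.mem_nhds ha)

theorem injective_fderiv (h : IsLocalParam k M V U φ) (ha : a ∈ V) :
    Injective (fderiv ℝ φ a) := by
  simpa only [fderivWithin_of_isOpen h.isOpen_source ha] using h.immersion a ha

theorem eventually_mem (h : IsLocalParam k M V U φ) (ha : a ∈ V) :
    ∀ᶠ z in 𝓝 a, φ z ∈ M :=
  eventually_of_mem (h.isOpen_source.mem_nhds ha) fun z hz ↦
    (h.image_eq ▸ mem_image_of_mem φ hz : φ z ∈ U ∩ M).2

theorem exists_continuousAt_comp_eq {X : Type*} [TopologicalSpace X]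
    (h : IsLocalParam k M V U φ) (ha : a ∈ V) {f : X → H} {x₀ : X} (hfa : f x₀ = φ a)
    (hf : ContinuousAt f x₀) (hfM : ∀ᶠ z in 𝓝 x₀, f z ∈ M) :
    ∃ σ : X → EuclideanSpace ℝ (Fin m), ContinuousAt σ x₀ ∧ σ x₀ = a ∧ φ ∘ σ =ᶠ[𝓝 x₀] f := by
  have hfx₀ : f x₀ ∈ U ∩ M := hfa ▸ h.image_eq ▸ mem_image_of_mem φ ha
  have hfUM : ∀ᶠ z in 𝓝 x₀, f z ∈ U ∩ M := by
    filter_upwards [hf.preimage_mem_nhds (h.isOpen_target.mem_nhds hfx₀.1), hfM]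
      with z hzU hzM
    exact ⟨hzU, hzM⟩
  refine ⟨invFunOn φ V ∘ f, ?_, ?_, ?_⟩
  · exact (h.continuousOn_inv _ hfx₀).tendsto.comp (tendsto_nhdsWithin_iff.2 ⟨hf, hfUM⟩)
  · simp only [comp_apply, hfa, h.injOn.leftInvOn_invFunOn ha]
  · filter_upwards [hfUM] with z hz
    exact invFunOn_eq (h.image_eq ▸ hz : f z ∈ φ '' V)

theorem exists_contDiffAt_comp_eq {X : Type*} [NormedAddCommGroup X] [NormedSpace ℝ X]
    (h : IsLocalParam k M V U φ) (hk : k ≠ 0) (ha : a ∈ V) {f : X → H} {x₀ : X}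
    (hfa : f x₀ = φ a) (hf : ContDiffAt ℝ k f x₀) (hfM : ∀ᶠ z in 𝓝 x₀, f z ∈ M) :
    ∃ τ : X → EuclideanSpace ℝ (Fin m),
      ContDiffAt ℝ k τ x₀ ∧ τ x₀ = a ∧ φ ∘ τ =ᶠ[𝓝 x₀] f := by
  obtain ⟨σ, hσ, hσa, hφσ⟩ := h.exists_continuousAt_comp_eq ha hfa hf.continuousAt hfM
  obtain ⟨g, hg, hgφ⟩ := (h.contDiffAt ha).exists_leftInverse_of_injective_fderiv
    (by exact_mod_cast hk) (h.injective_fderiv ha)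
  have hgf : g ∘ f =ᶠ[𝓝 x₀] σ := by
    filter_upwards [hφσ, (hσa ▸ hσ.tendsto).eventually hgφ] with z hφz hgz
    rw [comp_apply, ← hφz, comp_apply, hgz]
  refine ⟨g ∘ f, (hfa ▸ hg).comp x₀ hf, hgf.self_of_nhds.trans hσa, ?_⟩
  filter_upwards [hgf, hφσ] with z hgz hφz
  rw [comp_apply, hgz]
  exact hφz

end IsLocalParam

theorem second_derivative_difference_tangent_general
    {H : Type*} [NormedAddCommGroup H] [InnerProductSpace ℝ H]
    {m : ℕ} {k : ℕ∞} (hk : 2 ≤ k) {M : Set H}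
    {V₁ V₂ : Set (EuclideanSpace ℝ (Fin m))} {U₁ U₂ : Set H}
    {φ₁ φ₂ : EuclideanSpace ℝ (Fin m) → H}
    (h₁ : IsLocalParam k M V₁ U₁ φ₁) (h₂ : IsLocalParam k M V₂ U₂ φ₂)
    {y : H}
    {x₁ x₂ : EuclideanSpace ℝ (Fin m)}
    (hx₁ : x₁ ∈ V₁) (hφ₁ : φ₁ x₁ = y)
    (hx₂ : x₂ ∈ V₂) (hφ₂ : φ₂ x₂ = y)
    {w₁ w₂ : H}
    {v₁ v₂ u₁ u₂ : EuclideanSpace ℝ (Fin m)}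
    (hv₁ : fderivWithin ℝ φ₁ V₁ x₁ v₁ = w₁)
    (hv₂ : fderivWithin ℝ φ₁ V₁ x₁ v₂ = w₂)
    (hu₁ : fderivWithin ℝ φ₂ V₂ x₂ u₁ = w₁)
    (hu₂ : fderivWithin ℝ φ₂ V₂ x₂ u₂ = w₂) :
    fderivWithin ℝ (fderivWithin ℝ φ₁ V₁) V₁ x₁ v₁ v₂
      - fderivWithin ℝ (fderivWithin ℝ φ₂ V₂) V₂ x₂ u₁ u₂ ∈ TangentAt k m M y := by
  have hk₂ : ((2 : ℕ∞) : WithTop ℕ∞) ≤ k := by exact_mod_cast hk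
  obtain ⟨τ, hτ, hτx₂, hφτ⟩ := h₁.exists_contDiffAt_comp_eq (by rintro rfl; simp at hk) hx₁
    (hφ₂.trans hφ₁.symm) (h₂.contDiffAt hx₂) (h₂.eventually_mem hx₂)
  have hφ₁τ : ContDiffAt ℝ 2 φ₁ (τ x₂) := hτx₂ ▸ (h₁.contDiffAt hx₁).of_le hk₂
  have hDφ₂ : fderiv ℝ φ₂ x₂ = (fderiv ℝ φ₁ x₁).comp (fderiv ℝ τ x₂) := by
    rw [← hφτ.fderiv_eq, fderiv_comp x₂ (hφ₁τ.differentiableAt two_ne_zero)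
      ((hτ.of_le hk₂).differentiableAt two_ne_zero), hτx₂]
  have hDτ {u v} (huv : fderiv ℝ φ₂ x₂ u = fderiv ℝ φ₁ x₁ v) : fderiv ℝ τ x₂ u = v :=
    h₁.injective_fderiv hx₁ (by rw [← huv, hDφ₂]; rfl)
  rw [fderivWithin_of_isOpen h₁.isOpen_source hx₁] at hv₁ hv₂
  rw [fderivWithin_of_isOpen h₂.isOpen_source hx₂] at hu₁ hu₂
  rw [fderivWithin_fderivWithin_of_isOpen h₁.isOpen_source hx₁,
    fderivWithin_fderivWithin_of_isOpen h₂.isOpen_source hx₂, ← hφτ.fderiv.fderiv_eq,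
    fderiv_fderiv_comp_apply hφ₁τ (hτ.of_le hk₂), hDτ (hu₁.trans hv₁.symm),
    hDτ (hu₂.trans hv₂.symm), hτx₂]
  refine ⟨V₁, U₁, φ₁, x₁, h₁, hx₁, hφ₁, -(fderiv ℝ (fderiv ℝ τ) x₂ u₁ u₂), ?_⟩
  rw [fderivWithin_of_isOpen h₁.isOpen_source hx₁, map_neg]
  abel

/-- For two local parametrizations `φ₁, φ₂` of a `C^k`-submanifold `M`
(`k ≥ 2`) with overlapping targets, the difference of the second derivatives
`D²φ₁(x₁)(v₁, v₂) − D²φ₂(x₂)(u₁, u₂)` is tangent to `M` at `y`, where `x_i = φ_i⁻¹(y)`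
and `v_i, u_i` are the preimages of the tangent vectors `w_i` under `Dφ₁(x₁)`, `Dφ₂(x₂)`. -/
theorem second_derivative_difference_tangent
    {H : Type*} [NormedAddCommGroup H] [InnerProductSpace ℝ H] [CompleteSpace H]
    {m : ℕ} {k : ℕ∞} (hk : 2 ≤ k) {M : Set H} (hM : IsSubmanifold k m M)
    {V₁ V₂ : Set (EuclideanSpace ℝ (Fin m))} {U₁ U₂ : Set H}
    {φ₁ φ₂ : EuclideanSpace ℝ (Fin m) → H}
    (h₁ : IsLocalParam k M V₁ U₁ φ₁) (h₂ : IsLocalParam k M V₂ U₂ φ₂)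
    (hne : ((U₁ ∩ U₂) ∩ M).Nonempty)
    {y : H} (hy : y ∈ (U₁ ∩ U₂) ∩ M)
    {x₁ x₂ : EuclideanSpace ℝ (Fin m)}
    (hx₁ : x₁ ∈ V₁) (hφ₁ : φ₁ x₁ = y)
    (hx₂ : x₂ ∈ V₂) (hφ₂ : φ₂ x₂ = y)
    {w₁ w₂ : H} (hw₁ : w₁ ∈ TangentAt k m M y) (hw₂ : w₂ ∈ TangentAt k m M y)
    {v₁ v₂ u₁ u₂ : EuclideanSpace ℝ (Fin m)}
    (hv₁ : fderivWithin ℝ φ₁ V₁ x₁ v₁ = w₁)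
    (hv₂ : fderivWithin ℝ φ₁ V₁ x₁ v₂ = w₂)
    (hu₁ : fderivWithin ℝ φ₂ V₂ x₂ u₁ = w₁)
    (hu₂ : fderivWithin ℝ φ₂ V₂ x₂ u₂ = w₂) :
    fderivWithin ℝ (fderivWithin ℝ φ₁ V₁) V₁ x₁ v₁ v₂
      - fderivWithin ℝ (fderivWithin ℝ φ₂ V₂) V₂ x₂ u₁ u₂ ∈ TangentAt k m M y :=
  second_derivative_difference_tangent_general hk h₁ h₂ hx₁ hφ₁ hx₂ hφ₂ hv₁ hv₂ hu₁ hu₂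
end
end

section
/- Let (G, H₀, H) be real separable Hilbert spaces with G ⊆ H₀ ⊆ H and continuous inclusions. Let M be an m-dimensional C²-submanifold of H with M ⊆ G, and let φ : V → U ∩ M be a local parametrization of M satisfying φ ∈ C(V; G) ∩ C¹(V; H₀) ∩ C²(V; H). Let A : H₀ → H be of class C¹ and B : G → H₀ be continuous, and assume A(y) ∈ T_y M and B(y) ∈ T_y M for every y ∈ U ∩ M. Define a, b : V → ℝ^m by Dφ(x) a(x) = A(φ(x)) and Dφ(x) b(x) = B(φ(x)) for x ∈ V (possible and unique since Dφ(x) is a linear isomorphism ℝ^m → T_{φ(x)} M). Then a ∈ C¹(V; ℝ^m), b ∈ C(V; ℝ^m), and for every x ∈ V: DA(φ(x)) B(φ(x)) = Dφ(x)(Da(x) b(x)) + D²φ(x)(a(x), b(x)), where DA denotes the Fréchet derivative of A : H₀ → H and Dφ, D²φ are the Fréchet derivatives of φ as a map into H. -/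
open Set Function

noncomputable section

/-! The coordinates `a` of a tangent field along an immersion `Φ` are recovered from `DΦ a` by
the smooth left inverse `T ↦ (T† T)⁻¹ T†` of injective operators on a finite-dimensional space,
so they are as regular as `DΦ` and the field. The formula is then the product rule for
`y ↦ DΦ(y) (a y)` together with the chain rule for `A ∘ φ`, using `Dφ(x) (b x) = B (φ x)` and
the symmetry of `D²Φ(x)`. -/

open ContinuousLinearMap
open scoped InnerProduct

section LeftInverse

variable {E F : Type*} [NormedAddCommGroup E] [InnerProductSpace ℝ E]
  [NormedAddCommGroup F] [InnerProductSpace ℝ F] [CompleteSpace F]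

/-- `adjoint` is conjugate-linear; over `ℝ` this makes it a continuous linear map. -/
def adjointL [CompleteSpace E] : (E →L[ℝ] F) →L[ℝ] (F →L[ℝ] E) :=
  AddMonoidHom.toRealLinearMap (adjoint : (E →L[ℝ] F) ≃ₗᵢ⋆[ℝ] (F →L[ℝ] E)).toAddMonoidHom
    adjoint.continuous

theorem isUnit_adjoint_comp_self [FiniteDimensional ℝ E] {T : E →L[ℝ] F}
    (hT : Injective T) : IsUnit (T† ∘L T) := by
  have hinj : Injective (T† ∘L T) := by
    rw [coe_comp]
    exact (adjoint_comp_self_injective_iff T).mpr hT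
  rw [isUnit_iff_isUnit_toLinearMap, Module.End.isUnit_iff]
  exact ⟨hinj, LinearMap.injective_iff_surjective.mp hinj⟩

theorem ring_inverse_adjoint_comp_self_apply [FiniteDimensional ℝ E] {T : E →L[ℝ] F}
    (hT : Injective T) (v : E) : Ring.inverse (T† ∘L T) ((T†) (T v)) = v := by
  simpa using congr($(Ring.inverse_mul_cancel _ (isUnit_adjoint_comp_self hT)) v)

theorem ContDiffOn.of_clm_apply_eq [FiniteDimensional ℝ E] {X : Type*} [NormedAddCommGroup X]
    [NormedSpace ℝ X] {n : WithTop ℕ∞} {s : Set X} {T : X → E →L[ℝ] F} {u : X → E} {g : X → F}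
    (hT : ContDiffOn ℝ n T s) (hinj : ∀ x ∈ s, Injective (T x)) (hg : ContDiffOn ℝ n g s)
    (h : ∀ x ∈ s, T x (u x) = g x) : ContDiffOn ℝ n u s := by
  have hT' : ContDiffOn ℝ n (fun x => (T x)†) s :=
    (adjointL (E := E) (F := F)).contDiff.comp_contDiffOn hT
  have hgram : ContDiffOn ℝ n (fun x => Ring.inverse ((T x)† ∘L T x)) s := fun x hx => by
    have hunit : IsUnit ((T x)† ∘L T x) := isUnit_adjoint_comp_self (hinj x hx)
    have hinv : ContDiffAt ℝ n Ring.inverse ((T x)† ∘L T x) :=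
      hunit.unit_spec ▸ contDiffAt_ringInverse ℝ hunit.unit
    exact hinv.comp_contDiffWithinAt x ((hT'.clm_comp hT) x hx)
  refine (hgram.clm_apply (hT'.clm_apply hg)).congr fun x hx => ?_
  rw [← h x hx, ring_inverse_adjoint_comp_self_apply (hinj x hx)]

end LeftInverse

theorem fderivWithin_fderivWithin_apply {𝕜 E F : Type*} [RCLike 𝕜]
    [NormedAddCommGroup E] [NormedSpace 𝕜 E] [NormedAddCommGroup F] [NormedSpace 𝕜 F]
    {Φ : E → F} {u : E → E} {s : Set E} {x : E} (hs : IsOpen s) (hx : x ∈ s)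
    (hΦ : ContDiffOn 𝕜 2 Φ s) (hu : DifferentiableWithinAt 𝕜 u s x) (v : E) :
    fderivWithin 𝕜 (fun y => fderivWithin 𝕜 Φ s y (u y)) s x v
      = fderivWithin 𝕜 Φ s x (fderivWithin 𝕜 u s x v)
        + fderivWithin 𝕜 (fderivWithin 𝕜 Φ s) s x (u x) v := by
  have hs' : UniqueDiffOn 𝕜 s := hs.uniqueDiffOn
  have hDΦ : DifferentiableWithinAt 𝕜 (fderivWithin 𝕜 Φ s) s x :=
    (hΦ.fderivWithin hs' (by norm_num)).differentiableOn one_ne_zero x hx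
  have hsymm : IsSymmSndFDerivWithinAt 𝕜 Φ s x :=
    (hΦ x hx).isSymmSndFDerivWithinAt (by simp [minSmoothness_of_isRCLikeNormedField]) hs'
      (hs.interior_eq.symm ▸ subset_closure hx) hx
  rw [(hDΦ.hasFDerivWithinAt.clm_apply hu.hasFDerivWithinAt).fderivWithin (hs' x hx)]
  simp only [add_apply, ContinuousLinearMap.comp_apply, flip_apply, hsymm.eq v (u x)]

open TopologicalSpace in
theorem decomposition_DA_B_general
    {G H₀ H : Type*}
    [NormedAddCommGroup G] [InnerProductSpace ℝ G]
    [NormedAddCommGroup H₀] [InnerProductSpace ℝ H₀]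
    [NormedAddCommGroup H] [InnerProductSpace ℝ H] [CompleteSpace H]
    (jG : G →L[ℝ] H₀) (j₀ : H₀ →L[ℝ] H)
    (hj₀ : Function.Injective j₀)
    {m : ℕ} {M : Set H}
    {V : Set (EuclideanSpace ℝ (Fin m))} {U : Set H}
    {φG : EuclideanSpace ℝ (Fin m) → G}
    (hφ : IsLocalParam 2 M V U fun x => j₀ (jG (φG x)))
    (hφG : ContinuousOn φG V)
    (hφ0 : ContDiffOn ℝ 1 (fun x => jG (φG x)) V)
    {A : H₀ → H} (hA : ContDiff ℝ 1 A)
    {B : G → H₀} (hB : Continuous B)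
    {a b : EuclideanSpace ℝ (Fin m) → EuclideanSpace ℝ (Fin m)}
    (ha : ∀ x ∈ V, fderivWithin ℝ (fun x => j₀ (jG (φG x))) V x (a x) = A (jG (φG x)))
    (hb : ∀ x ∈ V, fderivWithin ℝ (fun x => j₀ (jG (φG x))) V x (b x) = j₀ (B (φG x))) :
    ContDiffOn ℝ 1 a V ∧ ContinuousOn b V ∧
      ∀ x ∈ V,
        fderiv ℝ A (jG (φG x)) (B (φG x))
          = fderivWithin ℝ (fun x => j₀ (jG (φG x))) V x (fderivWithin ℝ a V x (b x))
            + fderivWithin ℝ (fderivWithin ℝ (fun x => j₀ (jG (φG x))) V) V x (a x) (b x) := by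
  obtain ⟨hV, -, hΦ, -, -, -, hDΦ_inj⟩ := hφ
  have hDΦ : ContDiffOn ℝ 1 (fderivWithin ℝ (fun x => j₀ (jG (φG x))) V) V :=
    hΦ.fderivWithin hV.uniqueDiffOn (by norm_num)
  have ha_C1 : ContDiffOn ℝ 1 a V := hDΦ.of_clm_apply_eq hDΦ_inj (hA.comp_contDiffOn hφ0) ha
  have hb_C0 : ContinuousOn b V := contDiffOn_zero.mp <|
    (hDΦ.of_le zero_le_one).of_clm_apply_eq hDΦ_inj
      (contDiffOn_zero.mpr ((j₀.continuous.comp hB).comp_continuousOn hφG)) hb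
  refine ⟨ha_C1, hb_C0, fun x hx => ?_⟩
  have hV' : UniqueDiffWithinAt ℝ V x := hV.uniqueDiffOn x hx
  have hφ0x := ((hφ0.differentiableOn one_ne_zero) x hx).hasFDerivWithinAt
  have hDφ_b : fderivWithin ℝ (fun y => jG (φG y)) V x (b x) = B (φG x) := by
    apply hj₀
    have hDΦx : HasFDerivWithinAt (fun y => j₀ (jG (φG y))) _ V x :=
      j₀.hasFDerivAt.comp_hasFDerivWithinAt x hφ0x
    rw [← hb x hx, hDΦx.fderivWithin hV']
    rfl
  calc fderiv ℝ A (jG (φG x)) (B (φG x))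
      = fderivWithin ℝ (fun y => A (jG (φG y))) V x (b x) := by
        have hDAφ : HasFDerivWithinAt (fun y => A (jG (φG y))) _ V x :=
          (hA.differentiable one_ne_zero _).hasFDerivAt.comp_hasFDerivWithinAt x hφ0x
        rw [hDAφ.fderivWithin hV', ContinuousLinearMap.comp_apply, hDφ_b]
    _ = fderivWithin ℝ (fun y => fderivWithin ℝ (fun x => j₀ (jG (φG x))) V y (a y)) V x
          (b x) := by
        rw [fderivWithin_congr (fun y hy => ha y hy) (ha x hx)]
    _ = _ := fderivWithin_fderivWithin_apply hV hx hΦ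
        ((ha_C1.differentiableOn one_ne_zero) x hx) (b x)

open TopologicalSpace in
/-- Let `(G, H₀, H)` be continuously embedded separable real Hilbert spaces
(the embeddings being the injective continuous linear maps `jG : G → H₀` and `j₀ : H₀ → H`),
let `M ⊆ G` be an `m`-dimensional `C²`-submanifold of `H`, and let `φ : V → U ∩ M` be a local
parametrization with `φ ∈ C(V;G) ∩ C¹(V;H₀) ∩ C²(V;H)`. If `A : H₀ → H` is `C¹`, `B : G → H₀`
is continuous, both are tangent along `U ∩ M`, and `a, b : V → ℝ^m` are the local coordinate
representations of `A, B`, then `a ∈ C¹`, `b ∈ C⁰`, and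
`DA(φ(x)) B(φ(x)) = Dφ(x)(Da(x) b(x)) + D²φ(x)(a(x), b(x))` on `V`. -/
theorem decomposition_DA_B
    {G H₀ H : Type*}
    [NormedAddCommGroup G] [InnerProductSpace ℝ G] [CompleteSpace G] [SeparableSpace G]
    [NormedAddCommGroup H₀] [InnerProductSpace ℝ H₀] [CompleteSpace H₀] [SeparableSpace H₀]
    [NormedAddCommGroup H] [InnerProductSpace ℝ H] [CompleteSpace H] [SeparableSpace H]
    (jG : G →L[ℝ] H₀) (j₀ : H₀ →L[ℝ] H)
    (hjG : Function.Injective jG) (hj₀ : Function.Injective j₀)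
    {m : ℕ} {M : Set H} (hM : IsSubmanifold 2 m M)
    (hMG : M ⊆ Set.range fun g => j₀ (jG g))
    {V : Set (EuclideanSpace ℝ (Fin m))} {U : Set H}
    {φG : EuclideanSpace ℝ (Fin m) → G}
    (hφ : IsLocalParam 2 M V U fun x => j₀ (jG (φG x)))
    (hφG : ContinuousOn φG V)
    (hφ0 : ContDiffOn ℝ 1 (fun x => jG (φG x)) V)
    {A : H₀ → H} (hA : ContDiff ℝ 1 A)
    {B : G → H₀} (hB : Continuous B)
    (hAtang : ∀ x ∈ V, A (jG (φG x)) ∈ TangentAt 2 m M (j₀ (jG (φG x))))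
    (hBtang : ∀ x ∈ V, j₀ (B (φG x)) ∈ TangentAt 2 m M (j₀ (jG (φG x))))
    {a b : EuclideanSpace ℝ (Fin m) → EuclideanSpace ℝ (Fin m)}
    (ha : ∀ x ∈ V, fderivWithin ℝ (fun x => j₀ (jG (φG x))) V x (a x) = A (jG (φG x)))
    (hb : ∀ x ∈ V, fderivWithin ℝ (fun x => j₀ (jG (φG x))) V x (b x) = j₀ (B (φG x))) :
    ContDiffOn ℝ 1 a V ∧ ContinuousOn b V ∧
      ∀ x ∈ V,
        fderiv ℝ A (jG (φG x)) (B (φG x))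
          = fderivWithin ℝ (fun x => j₀ (jG (φG x))) V x (fderivWithin ℝ a V x (b x))
            + fderivWithin ℝ (fderivWithin ℝ (fun x => j₀ (jG (φG x))) V) V x (a x) (b x) :=
  decomposition_DA_B_general jG j₀ hj₀ hφ hφG hφ0 hA hB ha hb
end
end

section
/- Let H be a real Banach space and let T₁, …, T_d : ℝ → L(H) be strongly continuous groups on H that are commutative in the sense that for every permutation π of {1, …, d} and every t ∈ ℝ one has T₁(t) ∘ ⋯ ∘ T_d(t) = T_{π(1)}(t) ∘ ⋯ ∘ T_{π(d)}(t). Then for every permutation π of {1, …, d} and all t₁, …, t_d ∈ ℝ one has T₁(t₁) ∘ ⋯ ∘ T_d(t_d) = T_{π(1)}(t_{π(1)}) ∘ ⋯ ∘ T_{π(d)}(t_{π(d)}). -/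
/-!
Comparing the products over `σ` and `σ ∘ swap 0 1`, where `σ` sends `0, 1` to `i, j`, and
cancelling the invertible common tail shows that `T_i(s)` and `T_j(s)` commute for every `s`.
Since `T_i(q s) = T_i(s / n)^m` and `T_j(s) = T_j(s / n)^n` for `q = m / n`, the operator
`T_j(s)` then commutes with `T_i` on the dense set `ℚ s`, hence everywhere by strong continuity.
Once all the operators commute, the product does not depend on the order of its factors.
-/

open Multiplicative

theorem Commute.of_ofFn_prod_eq_swap_zero_one {M : Type*} [Monoid M] {n : ℕ}
    (f : Fin (n + 2) → M) (hf : ∀ k, IsUnit (f k))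
    (h : (List.ofFn f).prod = (List.ofFn fun k => f (Equiv.swap 0 1 k)).prod) :
    Commute (f 0) (f 1) := by
  have hfix (k : Fin n) : Equiv.swap 0 1 k.succ.succ = k.succ.succ :=
    Equiv.swap_apply_of_ne_of_ne (Fin.succ_ne_zero _) (Fin.succ_succ_ne_one _)
  simp only [List.ofFn_succ, List.prod_cons, Fin.succ_zero_eq_one, Equiv.swap_apply_left,
    Equiv.swap_apply_right, hfix, ← mul_assoc] at h
  have hrest : IsUnit (List.ofFn fun k : Fin n => f k.succ.succ).prod :=
    List.prod_isUnit (by simp [hf])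
  exact hrest.mul_right_cancel h

theorem MonoidHom.map_ofAdd_intCast_mul {G : Type*} [Group G] (f : Multiplicative ℝ →* G)
    (z : ℤ) (s : ℝ) : f (ofAdd (z * s)) = f (ofAdd s) ^ z := by
  rw [← zsmul_eq_mul, ofAdd_zsmul, map_zpow]

theorem MonoidHom.commute_map_ofAdd_ratCast_mul {M : Type*} [Monoid M]
    (f g : Multiplicative ℝ →* M) (h : ∀ x, Commute (f x) (g x)) (q : ℚ) (s : ℝ) :
    Commute (f (ofAdd (q * s))) (g (ofAdd s)) := by
  have hden : (q.den : ℝ) ≠ 0 := Nat.cast_ne_zero.2 q.den_nz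
  obtain ⟨u, rfl⟩ : ∃ u : ℝ, s = ((q.den : ℤ) : ℝ) * u :=
    ⟨s / q.den, by push_cast; field_simp⟩
  have hq : (q : ℝ) * (((q.den : ℤ) : ℝ) * u) = (q.num : ℝ) * u := by
    rw [Rat.cast_def]; push_cast; field_simp
  have hu : Commute (f.toHomUnits (ofAdd u)) (g.toHomUnits (ofAdd u)) :=
    Commute.units_val_iff.1 (h _)
  rw [hq, ← f.coe_toHomUnits, ← g.coe_toHomUnits, MonoidHom.map_ofAdd_intCast_mul,
    MonoidHom.map_ofAdd_intCast_mul]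
  exact (hu.zpow_zpow _ _).units_val

theorem Fin.exists_perm_apply_zero_apply_one {n : ℕ} {i j : Fin (n + 2)} (hij : i ≠ j) :
    ∃ σ : Equiv.Perm (Fin (n + 2)), σ 0 = i ∧ σ 1 = j := by
  have hj : Equiv.swap 0 i j ≠ 0 := by
    rw [Ne, Equiv.swap_apply_eq_iff, Equiv.swap_apply_left]; exact hij.symm
  refine ⟨Equiv.swap 0 i * Equiv.swap 1 (Equiv.swap 0 i j), ?_, ?_⟩
  · rw [Equiv.Perm.mul_apply, Equiv.swap_apply_of_ne_of_ne zero_ne_one hj.symm,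
      Equiv.swap_apply_left]
  · rw [Equiv.Perm.mul_apply, Equiv.swap_apply_left, Equiv.swap_apply_self]

theorem Commute.of_forall_ofFn_prod_perm_eq {M : Type*} [Monoid M] {d : ℕ}
    (A : Fin d → M) (hA : ∀ k, IsUnit (A k))
    (h : ∀ π : Equiv.Perm (Fin d), (List.ofFn A).prod = (List.ofFn fun k => A (π k)).prod)
    (i j : Fin d) : Commute (A i) (A j) := by
  rcases eq_or_ne i j with rfl | hij
  · exact Commute.refl _
  obtain _ | _ | n := d
  · exact i.elim0
  · exact absurd (Fin.ext (by omega)) hij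
  obtain ⟨σ, rfl, rfl⟩ := Fin.exists_perm_apply_zero_apply_one hij
  exact Commute.of_ofFn_prod_eq_swap_zero_one (fun k => A (σ k)) (fun k => hA _)
    ((h σ).symm.trans (h (σ * Equiv.swap 0 1)))

theorem ContinuousLinearMap.isClosed_setOf_commute {X R E : Type*} [TopologicalSpace X]
    [Semiring R] [TopologicalSpace E] [T2Space E] [AddCommMonoid E] [Module R E]
    (T : X → E →L[R] E) (hT : ∀ x : E, Continuous fun s => T s x) (B : E →L[R] E) :
    IsClosed {s | Commute (T s) B} := by
  have : {s | Commute (T s) B} = ⋂ x : E, {s | T s (B x) = B (T s x)} := by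
    ext s; simp [Commute, SemiconjBy, ContinuousLinearMap.ext_iff]
  rw [this]
  exact isClosed_iInter fun x => isClosed_eq (hT _) (B.continuous.comp (hT x))

theorem denseRange_ratCast_mul {t : ℝ} (ht : t ≠ 0) : DenseRange fun q : ℚ => (q : ℝ) * t :=
  (Homeomorph.mulRight₀ t ht).surjective.denseRange.comp Rat.denseRange_cast
    (Homeomorph.mulRight₀ t ht).continuous

theorem ContinuousLinearMap.commute_map_ofAdd_of_forall_commute {R E : Type*} [Semiring R]
    [TopologicalSpace E] [T2Space E] [AddCommMonoid E] [Module R E]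
    (f g : Multiplicative ℝ →* E →L[R] E)
    (hf : ∀ x : E, Continuous fun s : ℝ => f (ofAdd s) x)
    (h : ∀ x, Commute (f x) (g x)) (s t : ℝ) : Commute (f (ofAdd s)) (g (ofAdd t)) := by
  rcases eq_or_ne t 0 with rfl | ht
  · rw [ofAdd_zero, map_one]
    exact Commute.one_right _
  exact (denseRange_ratCast_mul ht).induction_on s
    (isClosed_setOf_commute (fun s => f (ofAdd s)) hf _)
    fun q => f.commute_map_ofAdd_ratCast_mul g h q t

theorem commutative_groups_mixed_parameters_general
    {H : Type*} [NormedAddCommGroup H] [NormedSpace ℝ H]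
    {d : ℕ} (T : Fin d → ℝ → H →L[ℝ] H)
    (hid : ∀ i, T i 0 = ContinuousLinearMap.id ℝ H)
    (hgrp : ∀ i s t, T i (s + t) = (T i s).comp (T i t))
    (hcont : ∀ i (x : H), Continuous fun t => T i t x)
    (hcomm : ∀ (π : Equiv.Perm (Fin d)) (t : ℝ),
      (List.ofFn fun i => T i t).prod = (List.ofFn fun i => T (π i) t).prod) :
    ∀ (π : Equiv.Perm (Fin d)) (t : Fin d → ℝ),
      (List.ofFn fun i => T i (t i)).prod
        = (List.ofFn fun i => T (π i) (t (π i))).prod := by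
  let φ (i : Fin d) : Multiplicative ℝ →* H →L[ℝ] H :=
    { toFun := fun s => T i s.toAdd, map_one' := hid i, map_mul' := fun _ _ => hgrp i _ _ }
  have hall (i j : Fin d) (s t : ℝ) : Commute (T i s) (T j t) :=
    ContinuousLinearMap.commute_map_ofAdd_of_forall_commute (φ i) (φ j) (hcont i)
      (fun s => Commute.of_forall_ofFn_prod_perm_eq (fun k => T k s.toAdd)
        (fun k => (Group.isUnit s).map (φ k)) (hcomm · _) i j) s t
  intro π t
  exact ((π.ofFn_comp_perm fun i => T i (t i)).prod_eq'
    (List.pairwise_ofFn.2 fun a b _ => hall (π a) (π b) _ _)).symm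

/-- If `T₁, …, T_d` are commutative strongly continuous groups on a real
Banach space `H` (commutative meaning that for each permutation `π` and each `t ∈ ℝ` the
compositions `T₁(t) ∘ ⋯ ∘ T_d(t)` and `T_{π(1)}(t) ∘ ⋯ ∘ T_{π(d)}(t)` agree), then for every
permutation `π` and all `t₁, …, t_d ∈ ℝ` one has
`T₁(t₁) ∘ ⋯ ∘ T_d(t_d) = T_{π(1)}(t_{π(1)}) ∘ ⋯ ∘ T_{π(d)}(t_{π(d)})`. -/
theorem commutative_groups_mixed_parameters
    {H : Type*} [NormedAddCommGroup H] [NormedSpace ℝ H] [CompleteSpace H]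
    {d : ℕ} (T : Fin d → ℝ → H →L[ℝ] H)
    (hid : ∀ i, T i 0 = ContinuousLinearMap.id ℝ H)
    (hgrp : ∀ i s t, T i (s + t) = (T i s).comp (T i t))
    (hcont : ∀ i (x : H), Continuous fun t => T i t x)
    (hcomm : ∀ (π : Equiv.Perm (Fin d)) (t : ℝ),
      (List.ofFn fun i => T i t).prod = (List.ofFn fun i => T (π i) t).prod) :
    ∀ (π : Equiv.Perm (Fin d)) (t : Fin d → ℝ),
      (List.ofFn fun i => T i (t i)).prod
        = (List.ofFn fun i => T (π i) (t (π i))).prod :=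
  commutative_groups_mixed_parameters_general T hid hgrp hcont hcomm
end
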